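/- Let k ≥ 1 be an integer and let N ≥ 0 be any number of variables. In the polynomial ring ℤ[x_1,…,x_N], m_{(2^k)} = Σ_{α ⊨ 2k} (−1)^{k + ℓ(α)} · (erun(α) + 1) · h_α, where the sum runs over all compositions α of 2k, ℓ(α) is the number of parts of α, h_α := h_{α_1} h_{α_2} ⋯ h_{α_{ℓ(α)}}, and erun(α) is the largest integer e with 0 ≤ e ≤ ℓ(α) such that α_1, α_2, …, α_e are all even. (This is the q = 1 specialization of the paper's corollary (−1)^k m_{2^k} = Σ_{α ⊨ 2k} [erun(α)+1]_q C_α, using C_α|_{q=1} = (−1)^{|α|−ℓ(α)} h_α.) -/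

import Mathlib

open MvPolynomial Finset

/-- The rectangular partition `(2^k)` with `k` parts all equal to `2`. -/
def rectPartition (a k : ℕ) : Nat.Partition (a * k) :=
  Nat.Partition.ofSums (a * k) (Multiset.replicate k a)
    (by rw [Multiset.sum_replicate, smul_eq_mul, mul_comm])

/-- `erun(α)`: the largest `e ≤ ℓ(α)` such that `α₁, …, α_e` are all even, i.e. the length
of the maximal even prefix of `α`. -/
def erun {n : ℕ} (α : Composition n) : ℕ :=
  (α.blocks.takeWhile (fun x => x % 2 == 0)).length

/-!
Let `H(t) = ∑ hₙ tⁿ`. Then `P(t) = ∏ᵢ (1 - xᵢ t) = 1 / H(t)`, and `P` is also the generating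
function of the signed sums `Sₙ = ∑_{α ⊨ n} (-1)^ℓ(α) h_α`. Splitting off the first block of `α`
shows that `A(t) = ∑ₙ ∑_{α ⊨ n} (-1)^ℓ(α) (erun(α) + 1) h_α tⁿ` satisfies `E(t) A(t) = P(t)`,
where `E` is the even part of `H`. As `E(-t) = E(t)` and `H(t) + H(-t) = 2 E(t)`,
`E · (A(t) + A(-t)) = P(t) + P(-t) = (H(t) + H(-t)) P(t) P(-t) = 2 E · ∏ᵢ (1 - xᵢ² t²)`,
and cancelling the unit `E` and reading off the coefficient of `t^(2k)` gives
`2 A_{2k} = 2 (-1)^k m_{(2^k)}`.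
-/

namespace PowerSeries

theorem rescale_C {S : Type*} [CommSemiring S] (r c : S) : rescale r (C c) = C c := by
  ext (_ | n) <;> simp [coeff_C]

theorem one_sub_C_mul_X_mul_mk_pow {S : Type*} [CommRing S] (a : S) :
    (1 - C a * X) * mk (a ^ ·) = 1 := by
  simpa [rescale_mk, rescale_X, mul_comm] using
    congrArg (rescale a) (mk_one_mul_one_sub_eq_one S)

theorem mk_mul_mk_eq_of_succ {S : Type*} [CommRing S] {u a b : ℕ → S} (hu : u 0 = 1)
    (h0 : a 0 = b 0)
    (hsucc : ∀ n, a (n + 1) = b (n + 1) - ∑ i : Fin (n + 1), u (i + 1) * a (n - i)) :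
    mk u * mk a = mk b := by
  ext (_ | n)
  · simp [hu, h0]
  · rw [coeff_mul, Finset.Nat.sum_antidiagonal_eq_sum_range_succ_mk, Finset.sum_range_succ',
      ← Fin.sum_univ_eq_sum_range (fun i => coeff (i + 1) (mk u) * coeff (n + 1 - (i + 1)) (mk a))]
    simp [hu, hsucc]

theorem prod_one_sub_mul_rescale_neg_one {ι S : Type*} [CommRing S] (s : Finset ι) (a : ι → S) :
    (∏ i ∈ s, (1 - C (a i) * X)) * rescale (-1) (∏ i ∈ s, (1 - C (a i) * X)) =
      ∏ i ∈ s, (1 - C (a i ^ 2) * X ^ 2) := by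
  rw [map_prod, ← Finset.prod_mul_distrib]
  refine Finset.prod_congr rfl fun i _ => ?_
  rw [map_sub, map_one, map_mul, rescale_C, rescale_neg_one_X, map_pow]
  ring

theorem coeff_two_mul_prod_one_sub_C_mul_X_sq {ι S : Type*} [CommRing S]
    (s : Finset ι) (a : ι → S) (k : ℕ) :
    coeff (2 * k) (∏ i ∈ s, (1 - C (a i) * X ^ 2)) =
      (-1) ^ k * ∑ T ∈ s.powersetCard k, ∏ i ∈ T, a i := by
  have hexpand : ∏ i ∈ s, (1 - C (a i) * X ^ 2) =
      ∑ T ∈ s.powerset, C ((-1) ^ T.card * ∏ i ∈ T, a i) * X ^ (2 * T.card) := by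
    simp_rw [sub_eq_add_neg, Finset.prod_one_add]
    refine Finset.sum_congr rfl fun T _ => ?_
    rw [Finset.prod_neg, Finset.prod_mul_distrib, Finset.prod_const, map_mul, map_pow, map_neg,
      map_one, map_prod, pow_mul]
    ring
  simp only [hexpand, map_sum, coeff_C_mul_X_pow, Finset.mul_sum]
  rw [← Finset.sum_filter, Finset.powersetCard_eq_filter]
  refine Finset.sum_congr (Finset.filter_congr fun T _ => by omega) fun T hT => ?_
  rw [(Finset.mem_filter.1 hT).2]

end PowerSeries

namespace Composition

variable {n : ℕ}

def cons (i : Fin (n + 1)) (c : Composition (n - i)) : Composition (n + 1) where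
  blocks := ((i : ℕ) + 1) :: c.blocks
  blocks_pos := by
    rintro b (_ | ⟨_, hb⟩)
    exacts [Nat.succ_pos _, c.blocks_pos hb]
  blocks_sum := by
    rw [List.sum_cons, c.blocks_sum]
    omega

@[simp]
theorem cons_blocks (i : Fin (n + 1)) (c : Composition (n - i)) :
    (cons i c).blocks = ((i : ℕ) + 1) :: c.blocks :=
  rfl

@[simp]
theorem cons_length (i : Fin (n + 1)) (c : Composition (n - i)) :
    (cons i c).length = c.length + 1 :=
  rfl

def consEquiv (n : ℕ) : (Σ i : Fin (n + 1), Composition (n - i)) ≃ Composition (n + 1) where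
  toFun p := cons p.1 p.2
  invFun c :=
    match c with
    | ⟨[], _, hsum⟩ => absurd hsum (by simp)
    | ⟨a :: l, hpos, hsum⟩ =>
      ⟨⟨a - 1, by simp at hsum; omega⟩,
        ⟨l, fun hb => hpos (List.mem_cons_of_mem a hb), by
          have := hpos List.mem_cons_self
          simp at hsum ⊢; omega⟩⟩
  left_inv := fun ⟨_, _⟩ => rfl
  right_inv := by
    rintro ⟨_ | ⟨a, l⟩, hpos, hsum⟩
    · simp at hsum
    · have := hpos List.mem_cons_self
      ext1
      simp only [cons_blocks, List.cons.injEq, and_true]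
      omega

theorem sum_succ {M : Type*} [AddCommMonoid M] (F : Composition (n + 1) → M) :
    ∑ c, F c = ∑ i : Fin (n + 1), ∑ c : Composition (n - i), F (cons i c) := by
  rw [← (consEquiv n).sum_comp, Fintype.sum_sigma]
  rfl

theorem sum_zero {M : Type*} [AddCommMonoid M] (F : Composition 0 → M) :
    ∑ c, F c = F (ones 0) :=
  Fintype.sum_eq_single _ fun c hc => absurd (eq_ones_iff_le_length.2 c.length.zero_le) hc

end Composition

theorem erun_cons {n : ℕ} (i : Fin (n + 1)) (c : Composition (n - i)) :
    erun (Composition.cons i c) = if Even (i + 1 : ℕ) then erun c + 1 else 0 := by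
  simp only [erun, Composition.cons_blocks, List.takeWhile_cons, Nat.even_iff, beq_iff_eq]
  split_ifs <;> simp

section CompositionSums

variable {R : Type*} [CommRing R] (h : ℕ → R)

def signedCompSum (n : ℕ) : R :=
  ∑ c : Composition n, (-1 : R) ^ c.length * (c.blocks.map h).prod

def erunCompSum (n : ℕ) : R :=
  ∑ c : Composition n, (-1 : R) ^ c.length * ((erun c + 1 : ℕ) : R) * (c.blocks.map h).prod

def evenPart (n : ℕ) : R := if Even n then h n else 0

theorem signedCompSum_zero : signedCompSum h 0 = 1 := by
  simp [signedCompSum, Composition.sum_zero]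

theorem erunCompSum_zero : erunCompSum h 0 = 1 := by
  simp [erunCompSum, Composition.sum_zero, erun]

theorem signedCompSum_succ (n : ℕ) :
    signedCompSum h (n + 1) = -∑ i : Fin (n + 1), h (i + 1) * signedCompSum h (n - i) := by
  simp only [signedCompSum, Composition.sum_succ, Finset.mul_sum, ← Finset.sum_neg_distrib]
  refine Finset.sum_congr rfl fun i _ => Finset.sum_congr rfl fun c _ => ?_
  simp only [Composition.cons_length, Composition.cons_blocks, List.map_cons, List.prod_cons]
  ring

/-- The weight `erun (a :: c) + 1` is `1 + (erun c + 1)` for even `a` and `1` for odd `a`; the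
common `1` produces `signedCompSum`. -/
theorem erunCompSum_succ (n : ℕ) :
    erunCompSum h (n + 1) =
      signedCompSum h (n + 1) - ∑ i : Fin (n + 1), evenPart h (i + 1) * erunCompSum h (n - i) := by
  simp only [erunCompSum, signedCompSum, Composition.sum_succ, Finset.mul_sum,
    ← Finset.sum_sub_distrib]
  refine Finset.sum_congr rfl fun i _ => Finset.sum_congr rfl fun c _ => ?_
  simp only [Composition.cons_length, Composition.cons_blocks, List.map_cons, List.prod_cons,
    erun_cons, evenPart]
  split_ifs <;> push_cast <;> ring

end CompositionSums

section CompositionSeries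

open PowerSeries

variable {R : Type*} [CommRing R] {h : ℕ → R}

theorem mk_mul_mk_signedCompSum (h0 : h 0 = 1) : mk h * mk (signedCompSum h) = 1 := by
  have h1 : (1 : R⟦X⟧) = mk fun n => if n = 0 then 1 else 0 := by
    ext n
    simp [PowerSeries.coeff_one]
  rw [h1]
  refine mk_mul_mk_eq_of_succ h0 (by simp [signedCompSum_zero]) fun n => ?_
  simp [signedCompSum_succ]

theorem mk_evenPart_mul_mk_erunCompSum (h0 : h 0 = 1) :
    mk (evenPart h) * mk (erunCompSum h) = mk (signedCompSum h) :=
  mk_mul_mk_eq_of_succ (by simp [evenPart, h0]) (by rw [erunCompSum_zero, signedCompSum_zero])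
    (erunCompSum_succ h)

theorem rescale_neg_one_mk_evenPart : rescale (-1 : R) (mk (evenPart h)) = mk (evenPart h) := by
  ext n
  by_cases hn : Even n
  · simp [evenPart, hn, hn.neg_one_pow]
  · simp [evenPart, hn]

theorem mk_add_rescale_neg_one_mk : mk h + rescale (-1 : R) (mk h) = 2 * mk (evenPart h) := by
  ext n
  rw [two_mul]
  rcases Nat.even_or_odd n with hn | hn
  · simp [evenPart, hn, hn.neg_one_pow]
  · simp [evenPart, hn.neg_one_pow, Nat.not_even_iff_odd.2 hn]

theorem mk_erunCompSum_add_rescale_neg_one (h0 : h 0 = 1) :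
    mk (erunCompSum h) + rescale (-1 : R) (mk (erunCompSum h)) =
      2 * (mk (signedCompSum h) * rescale (-1 : R) (mk (signedCompSum h))) := by
  set H := mk h
  set E := mk (evenPart h)
  set A := mk (erunCompSum h)
  set S := mk (signedCompSum h)
  set J := rescale (-1 : R)
  have hHS : H * S = 1 := mk_mul_mk_signedCompSum h0
  have hJHS : J H * J S = 1 := by rw [← map_mul, hHS, map_one]
  have hEA : E * A = S := mk_evenPart_mul_mk_erunCompSum h0
  have hEJA : E * J A = J S := by rw [← hEA, map_mul, rescale_neg_one_mk_evenPart]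
  have hE : IsUnit E := isUnit_iff_constantCoeff.2 (by simp [E, evenPart, h0])
  refine hE.mul_left_cancel ?_
  calc E * (A + J A) = S * (J H * J S) + J S * (H * S) := by
        rw [hJHS, hHS, mul_add, hEA, hEJA]; ring
    _ = (H + J H) * (S * J S) := by ring
    _ = E * (2 * (S * J S)) := by rw [mk_add_rescale_neg_one_mk]; ring

end CompositionSeries

section HsymmSeries

variable {σ R : Type*} [DecidableEq σ]

section CommSemiring

variable [CommSemiring R]

variable (R) in
noncomputable def hsymmOn (s : Finset σ) (n : ℕ) : MvPolynomial σ R :=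
  ∑ m ∈ s.sym n, (m.1.map X).prod

theorem hsymmOn_univ [Fintype σ] : hsymmOn R (univ : Finset σ) = hsymm σ R := by
  ext1 n
  rw [hsymmOn, sym_univ]
  rfl

theorem mk_hsymmOn_empty : PowerSeries.mk (hsymmOn R (∅ : Finset σ)) = 1 := by
  refine PowerSeries.ext fun n => ?_
  cases n <;> simp [hsymmOn, PowerSeries.coeff_one, Sym.eq_nil_of_card_zero]

theorem hsymmOn_insert {a : σ} {s : Finset σ} (ha : a ∉ s) (n : ℕ) :
    hsymmOn R (insert a s) n = ∑ i : Fin (n + 1), X a ^ (i : ℕ) * hsymmOn R s (n - i) := by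
  rw [hsymmOn, ← Finset.sum_coe_sort ((insert a s).sym n), ← (symInsertEquiv ha).symm.sum_comp,
    Fintype.sum_sigma]
  refine Finset.sum_congr rfl fun i _ => ?_
  rw [hsymmOn, Finset.mul_sum, ← Finset.sum_coe_sort (s.sym (n - i))]
  refine Finset.sum_congr rfl fun m _ => ?_
  simp [Sym.coe_fill, Sym.coe_replicate, mul_comm]

theorem mk_hsymmOn_insert {a : σ} {s : Finset σ} (ha : a ∉ s) :
    PowerSeries.mk (hsymmOn R (insert a s)) =
      PowerSeries.mk (X a ^ ·) * PowerSeries.mk (hsymmOn R s) := by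
  refine PowerSeries.ext fun n => ?_
  rw [PowerSeries.coeff_mul, Finset.Nat.sum_antidiagonal_eq_sum_range_succ_mk,
    ← Fin.sum_univ_eq_sum_range, PowerSeries.coeff_mk, hsymmOn_insert ha]
  simp

end CommSemiring

variable [CommRing R]

theorem prod_one_sub_mul_mk_hsymmOn (s : Finset σ) :
    (∏ i ∈ s, (1 - PowerSeries.C (X i) * PowerSeries.X)) * PowerSeries.mk (hsymmOn R s) = 1 := by
  induction s using Finset.induction_on with
  | empty => rw [prod_empty, one_mul, mk_hsymmOn_empty]
  | insert a s ha ih =>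
    rw [prod_insert ha, mk_hsymmOn_insert ha, mul_mul_mul_comm, mul_comm,
      PowerSeries.one_sub_C_mul_X_mul_mk_pow, mul_one, ih]

theorem prod_one_sub_mul_mk_hsymm [Fintype σ] :
    (∏ i, (1 - PowerSeries.C (X i) * PowerSeries.X)) * PowerSeries.mk (hsymm σ R) = 1 := by
  simpa only [hsymmOn_univ] using prod_one_sub_mul_mk_hsymmOn (R := R) (univ : Finset σ)

theorem mk_signedCompSum_hsymm [Fintype σ] :
    PowerSeries.mk (signedCompSum (hsymm σ R)) =
      ∏ i, (1 - PowerSeries.C (X i) * PowerSeries.X) := by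
  calc PowerSeries.mk (signedCompSum (hsymm σ R))
      = ((∏ i, (1 - PowerSeries.C (X i) * PowerSeries.X)) * PowerSeries.mk (hsymm σ R)) *
          PowerSeries.mk (signedCompSum (hsymm σ R)) := by
        rw [prod_one_sub_mul_mk_hsymm, one_mul]
    _ = ∏ i, (1 - PowerSeries.C (X i) * PowerSeries.X) := by
        rw [mul_assoc, mk_mul_mk_signedCompSum (hsymm_zero σ R), mul_one]

end HsymmSeries

theorem rectPartition_parts {a : ℕ} (ha : 0 < a) (k : ℕ) :
    (rectPartition a k).parts = Multiset.replicate k a := by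
  rw [rectPartition, Nat.Partition.ofSums_parts, Multiset.filter_eq_self]
  intro b hb
  rw [Multiset.eq_of_mem_replicate hb]
  exact ha.ne'

section RectPartitionTwo

variable {σ : Type*} [DecidableEq σ] {k : ℕ}

theorem card_eq_two_mul_card_toFinset {s : Multiset σ} (hs : ∀ a ∈ s, s.count a = 2) :
    Multiset.card s = 2 * s.toFinset.card := by
  rw [← Multiset.toFinset_sum_count_eq, Finset.sum_congr rfl fun a ha =>
    hs a (Multiset.mem_toFinset.1 ha), Finset.sum_const, smul_eq_mul, mul_comm]

theorem card_toFinset_eq_of_count_eq_two {s : Sym σ (2 * k)}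
    (hs : ∀ a ∈ (s : Multiset σ), (s : Multiset σ).count a = 2) :
    (s : Multiset σ).toFinset.card = k := by
  have := card_eq_two_mul_card_toFinset hs
  rw [Sym.card_coe] at this
  omega

theorem ofSym_eq_rectPartition_two_iff (s : Sym σ (2 * k)) :
    Nat.Partition.ofSym s = rectPartition 2 k ↔
      ∀ a ∈ (s : Multiset σ), (s : Multiset σ).count a = 2 := by
  rw [Nat.Partition.ext_iff, rectPartition_parts two_pos]
  change (s : Multiset σ).dedup.map (s : Multiset σ).count = _ ↔ _
  rw [Multiset.eq_replicate, Multiset.card_map]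
  constructor
  · rintro ⟨-, h⟩ a ha
    exact h _ (Multiset.mem_map_of_mem _ (Multiset.mem_dedup.2 ha))
  · intro h
    refine ⟨card_toFinset_eq_of_count_eq_two h, ?_⟩
    simp only [Multiset.mem_map, Multiset.mem_dedup]
    rintro _ ⟨a, ha, rfl⟩
    exact h a ha

variable (σ k) in
def rectPartitionTwoSymEquiv :
    {s : Sym σ (2 * k) // Nat.Partition.ofSym s = rectPartition 2 k} ≃
      {T : Finset σ // T.card = k} where
  toFun s := ⟨(s.1 : Multiset σ).toFinset,
    card_toFinset_eq_of_count_eq_two ((ofSym_eq_rectPartition_two_iff s.1).1 s.2)⟩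
  invFun T := ⟨Sym.mk (T.1.1 + T.1.1) (by rw [Multiset.card_add, Finset.card_val, T.2]; ring), by
    rw [ofSym_eq_rectPartition_two_iff]
    intro a ha
    have haT : a ∈ T.1 := (Multiset.mem_add.1 ha).elim id id
    simp [Multiset.count_add, Multiset.count_eq_one_of_mem T.1.nodup haT]⟩
  left_inv s := by
    have hs := (ofSym_eq_rectPartition_two_iff s.1).1 s.2
    refine Subtype.ext (Sym.ext (Multiset.ext.2 fun a => ?_))
    by_cases ha : a ∈ (s.1 : Multiset σ)
    · simp [Multiset.count_add, ha, hs a ha]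
    · simp [ha]
  right_inv T := by
    ext1
    simp [Multiset.toFinset_add]

theorem msymm_rectPartition_two [Fintype σ] (R : Type*) [CommSemiring R] (k : ℕ) :
    msymm σ R (rectPartition 2 k) = ∑ T ∈ powersetCard k univ, ∏ i ∈ T, X i ^ 2 := by
  rw [msymm, ← (rectPartitionTwoSymEquiv σ k).symm.sum_comp,
    Finset.sum_subtype _ (fun T => mem_powersetCard_univ)]
  refine Finset.sum_congr rfl fun T _ => ?_
  simp [rectPartitionTwoSymEquiv, Multiset.prod_add, Finset.prod_mul_distrib, sq]

end RectPartitionTwo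

theorem msymm_two_pow_eq_sum_compositions_general (k N : ℕ) :
    msymm (Fin N) ℤ (rectPartition 2 k) =
      ∑ α : Composition (2 * k),
        (-1 : MvPolynomial (Fin N) ℤ) ^ (k + α.length) *
          ((erun α + 1 : ℕ) : MvPolynomial (Fin N) ℤ) *
          (α.blocks.map (hsymm (Fin N) ℤ)).prod := by
  have hsum : ∑ α : Composition (2 * k),
      (-1 : MvPolynomial (Fin N) ℤ) ^ (k + α.length) *
        ((erun α + 1 : ℕ) : MvPolynomial (Fin N) ℤ) * (α.blocks.map (hsymm (Fin N) ℤ)).prod =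
      (-1) ^ k * erunCompSum (hsymm (Fin N) ℤ) (2 * k) := by
    simp only [erunCompSum, Finset.mul_sum, pow_add, mul_assoc]
  have key := congrArg (PowerSeries.coeff (2 * k))
    (mk_erunCompSum_add_rescale_neg_one (hsymm_zero (Fin N) ℤ))
  rw [mk_signedCompSum_hsymm, PowerSeries.prod_one_sub_mul_rescale_neg_one, map_add,
    PowerSeries.coeff_rescale, PowerSeries.coeff_mk, (even_two_mul k).neg_one_pow, one_mul,
    ← map_ofNat PowerSeries.C 2, PowerSeries.coeff_C_mul,
    PowerSeries.coeff_two_mul_prod_one_sub_C_mul_X_sq, ← msymm_rectPartition_two, ← two_mul] at key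
  rw [hsum, mul_left_cancel₀ two_ne_zero key, ← mul_assoc, ← pow_add, Even.neg_one_pow ⟨k, rfl⟩,
    one_mul]

/-- The `q = 1` specialization of the corollary for `(-1)^k ∇ m_{2^k}`:
`m_{(2^k)} = ∑_{α ⊨ 2k} (-1)^{k + ℓ(α)} (erun(α) + 1) h_α`. -/
theorem msymm_two_pow_eq_sum_compositions (k N : ℕ) (hk : 1 ≤ k) :
    msymm (Fin N) ℤ (rectPartition 2 k) =
      ∑ α : Composition (2 * k),
        (-1 : MvPolynomial (Fin N) ℤ) ^ (k + α.length) *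
          ((erun α + 1 : ℕ) : MvPolynomial (Fin N) ℤ) *
          (α.blocks.map (hsymm (Fin N) ℤ)).prod :=
  msymm_two_pow_eq_sum_compositions_general k N
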